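/- arXiv:2307.16011 — 2 statements merged into one kernel-verified Lean document; each statement's English description precedes it below -/
import Mathlib

section
/- Let a < b be reals and γ ≥ δ > 0 with a + γ ≤ b − γ. Then for every real x, (1/π)·∫_{a+γ}^{b−γ} Im(1/(x − λ − iδ)) dλ ≤ 1_{[a,b]}(x) + δ/(πγ). -/
/-!
The imaginary part of `(x - λ - iδ)⁻¹` is the Poisson kernel `δ / ((x - λ)² + δ²)`, so the
integral equals `arctan ((x - a - γ) / δ) - arctan ((x - b + γ) / δ)`. This is at most `π`
in any case. If `x ∉ [a, b]`, the point `x` lies at distance more than `γ` from the interval of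
integration, so one of the two arctangents is within `arctan (δ / γ) ≤ δ / γ` of `± π / 2`
while the other stays strictly between `-π / 2` and `π / 2`.
-/

open intervalIntegral Real Set

theorem Complex.im_inv_ofReal_sub_ofReal_sub_mul_I (x lam δ : ℝ) :
    (((x : ℂ) - lam - δ * Complex.I)⁻¹).im = δ / ((x - lam) ^ 2 + δ ^ 2) := by
  simp only [Complex.inv_im, Complex.sub_im, Complex.ofReal_im, Complex.mul_im, Complex.ofReal_re,
    Complex.I_im, Complex.I_re, Complex.normSq_apply, Complex.sub_re, Complex.mul_re]
  ring

theorem integral_div_sub_sq_add_sq (x c d δ : ℝ) :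
    ∫ lam in c..d, δ / ((x - lam) ^ 2 + δ ^ 2) = arctan ((x - c) / δ) - arctan ((x - d) / δ) := by
  rw [intervalIntegral.integral_comp_sub_left (fun t => δ / (t ^ 2 + δ ^ 2)) x]
  simp only [add_comm _ (δ ^ 2), integral_div_sq_add_sq]

namespace Real

theorem arctan_le_self {t : ℝ} (ht : 0 ≤ t) : arctan t ≤ t := by
  simpa only [tan_arctan] using
    le_tan (arctan_nonneg.mpr ht) (arctan_lt_pi_div_two t)

theorem pi_div_two_sub_arctan_le_inv {s t : ℝ} (hs : 0 < s) (hst : s ≤ t) :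
    π / 2 - arctan t ≤ s⁻¹ := by
  have ht : 0 < t := hs.trans_le hst
  calc π / 2 - arctan t = arctan t⁻¹ := (arctan_inv_of_pos ht).symm
    _ ≤ t⁻¹ := arctan_le_self (inv_nonneg.mpr ht.le)
    _ ≤ s⁻¹ := inv_anti₀ hs hst

theorem arctan_sub_arctan_lt_pi (u v : ℝ) : arctan u - arctan v < π := by
  linarith [arctan_lt_pi_div_two u, neg_pi_div_two_lt_arctan v]

end Real

theorem arctan_sub_arctan_le_div_of_notMem_Icc {a b γ δ x : ℝ} (hδ : 0 < δ) (hγ : 0 < γ)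
    (hx : x ∉ Icc a b) :
    arctan ((x - (a + γ)) / δ) - arctan ((x - (b - γ)) / δ) ≤ δ / γ := by
  have hratio : 0 < γ / δ := div_pos hγ hδ
  rw [← inv_div γ δ]
  rcases not_and_or.mp (mem_Icc.not.mp hx) with hxa | hxb
  · have hfar : γ / δ ≤ -((x - (a + γ)) / δ) := by
      rw [← neg_div, div_le_div_iff_of_pos_right hδ]
      linarith [not_le.mp hxa]
    linarith [pi_div_two_sub_arctan_le_inv hratio hfar, arctan_neg ((x - (a + γ)) / δ),
      neg_pi_div_two_lt_arctan ((x - (b - γ)) / δ)]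
  · have hfar : γ / δ ≤ (x - (b - γ)) / δ := by
      rw [div_le_div_iff_of_pos_right hδ]
      linarith [not_le.mp hxb]
    linarith [pi_div_two_sub_arctan_le_inv hratio hfar, arctan_lt_pi_div_two ((x - (a + γ)) / δ)]

theorem stmt5_general (a b γ δ : ℝ) (hδ : 0 < δ) (hγδ : δ ≤ γ) (x : ℝ) :
    (1 / Real.pi) * ∫ lam in (a + γ)..(b - γ), (((x : ℂ) - lam - δ * Complex.I)⁻¹).im ≤
      Set.indicator (Set.Icc a b) (fun _ => (1 : ℝ)) x + δ / (Real.pi * γ) := by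
  simp only [Complex.im_inv_ofReal_sub_ofReal_sub_mul_I, integral_div_sub_sq_add_sq]
  have hγ : 0 < γ := hδ.trans_le hγδ
  rw [one_div_mul_eq_div, div_le_iff₀ pi_pos]
  by_cases hx : x ∈ Icc a b
  · rw [indicator_of_mem hx]
    have hslack : 0 ≤ δ / (π * γ) * π := by positivity
    linarith [arctan_sub_arctan_lt_pi ((x - (a + γ)) / δ) ((x - (b - γ)) / δ)]
  · rw [indicator_of_notMem hx, zero_add, div_mul_eq_mul_div, mul_comm π γ, mul_div_mul_right _ _
      pi_ne_zero]
    exact arctan_sub_arctan_le_div_of_notMem_Icc hδ hγ hx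

/-- For `a < b`, `γ ≥ δ > 0` with `a + γ ≤ b - γ`, and every real `x`,
`(1/π) ∫_{a+γ}^{b-γ} Im (1/(x - λ - iδ)) dλ ≤ 1_{[a,b]}(x) + δ/(πγ)`. -/
theorem stmt5 (a b γ δ : ℝ) (hab : a < b) (hδ : 0 < δ) (hγδ : δ ≤ γ)
    (h : a + γ ≤ b - γ) (x : ℝ) :
    (1 / Real.pi) * ∫ lam in (a + γ)..(b - γ), (((x : ℂ) - lam - δ * Complex.I)⁻¹).im ≤
      Set.indicator (Set.Icc a b) (fun _ => (1 : ℝ)) x + δ / (Real.pi * γ) :=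
  stmt5_general a b γ δ hδ hγδ x
end

section
/- Let X be an N×N real symmetric matrix, a < b, γ ≥ δ > 0, and P the orthogonal projection onto the span of eigenvectors of X with eigenvalues in [a,b]. Then (1/π)·Im ∫_{a+γ}^{b−γ} (X − λ − iδ)^{-1} dλ ≤ P + (δ/(πγ))·Id in the positive semidefinite order. -/
/-!
Let `X = U diag(μ) Uᵀ` with `U` real orthogonal. Conjugation by `U` is a ⋆-algebra automorphism of
the complex matrices, so it commutes with inverses, with the entrywise integral and with `matIm`;
hence every matrix in the claim is `U diag(·) Uᵀ`, and positivity reduces to one inequality per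
eigenvalue `μ`. Since `Im (μ - λ - iδ)⁻¹ = δ / ((μ - λ)² + δ²)`, the `μ`-th diagonal entry of the
integral is `arctan ((b - γ - μ) / δ) - arctan ((a + γ - μ) / δ)`. For `μ ∈ [a, b]` this is below `π`.
Otherwise `μ` lies at distance at least `γ` from `[a + γ, b - γ]`, so one of the two arctangents is
within `π/2 - arctan (γ / δ) ≤ δ / γ` of `±π/2`, and the difference is at most `δ / γ`.
-/

open Matrix intervalIntegral
open scoped ComplexOrder

/-- The orthogonal projection onto the span of the eigenvectors of a symmetric matrix `X`
with eigenvalues in `[a, b]`, given by the spectral theorem. -/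
noncomputable def specProj {N : ℕ} (X : Matrix (Fin N) (Fin N) ℝ) (hX : X.IsHermitian)
    (a b : ℝ) : Matrix (Fin N) (Fin N) ℝ :=
  (hX.eigenvectorUnitary : Matrix (Fin N) (Fin N) ℝ) *
    Matrix.diagonal (fun i => if hX.eigenvalues i ∈ Set.Icc a b then (1 : ℝ) else 0) *
    star (hX.eigenvectorUnitary : Matrix (Fin N) (Fin N) ℝ)

/-- The imaginary part `(M - Mᴴ)/(2i)` of a complex matrix. -/
noncomputable def matIm {N : ℕ} (M : Matrix (Fin N) (Fin N) ℂ) : Matrix (Fin N) (Fin N) ℂ :=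
  (2 * Complex.I)⁻¹ • (M - Mᴴ)

/-- The (entrywise) integral of the resolvent `(X - λ - iδ)⁻¹` for `λ ∈ [s, t]`. -/
noncomputable def resolventInt {N : ℕ} (X : Matrix (Fin N) (Fin N) ℝ) (δ s t : ℝ) :
    Matrix (Fin N) (Fin N) ℂ :=
  Matrix.of fun i j => ∫ lam in s..t,
    ((X.map (fun r => (r : ℂ)) - ((lam : ℂ) + δ * Complex.I) • (1 : Matrix (Fin N) (Fin N) ℂ))⁻¹) i j


namespace Real

theorem arctan_le_self_s8 {x : ℝ} (hx : 0 ≤ x) : arctan x ≤ x := by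
  simpa [tan_arctan] using le_tan (arctan_nonneg.mpr hx) (arctan_lt_pi_div_two x)

theorem pi_div_two_sub_inv_le_arctan {x : ℝ} (hx : 0 < x) : π / 2 - x⁻¹ ≤ arctan x := by
  have := arctan_le_self_s8 (inv_nonneg.mpr hx.le)
  rw [arctan_inv_of_pos hx] at this
  linarith

theorem hasDerivAt_arctan_sub_div (c : ℝ) {δ : ℝ} (hδ : δ ≠ 0) (x : ℝ) :
    HasDerivAt (fun y => arctan ((y - c) / δ)) (δ / ((c - x) ^ 2 + δ ^ 2)) x := by
  refine (((hasDerivAt_id x).sub_const c).div_const δ).arctan.congr_deriv ?_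
  simp only [id]
  field_simp
  ring

theorem arctan_sub_arctan_div_pi_le {a b γ δ c : ℝ} (hδ : 0 < δ) (hγδ : δ ≤ γ) :
    (arctan ((b - γ - c) / δ) - arctan ((a + γ - c) / δ)) / π ≤
      (if c ∈ Set.Icc a b then 1 else 0) + δ / (π * γ) := by
  have hγ : 0 < γ := hδ.trans_le hγδ
  have hfar := pi_div_two_sub_inv_le_arctan (div_pos hγ hδ)
  rw [inv_div] at hfar
  have hlt := arctan_lt_pi_div_two ((b - γ - c) / δ)
  have hgt := neg_pi_div_two_lt_arctan ((a + γ - c) / δ)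
  rw [div_le_iff₀ pi_pos, add_mul, show δ / (π * γ) * π = δ / γ by field_simp]
  split_ifs with hc
  · linarith [div_pos hδ hγ]
  · rcases not_and_or.mp hc with hc | hc
    · have : arctan (γ / δ) ≤ arctan ((a + γ - c) / δ) :=
        arctan_le_arctan_iff.mpr (by gcongr; linarith)
      linarith
    · have : arctan ((b - γ - c) / δ) ≤ arctan (-(γ / δ)) :=
        arctan_le_arctan_iff.mpr (by rw [← neg_div]; gcongr; linarith)
      rw [arctan_neg] at this
      linarith

end Real

namespace Complex

theorem continuous_inv_ofReal_sub (c : ℝ) {δ : ℝ} (hδ : δ ≠ 0) :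
    Continuous fun x : ℝ => ((c : ℂ) - ((x : ℂ) + δ * I))⁻¹ :=
  (by fun_prop : Continuous fun x : ℝ => (c : ℂ) - ((x : ℂ) + δ * I)).inv₀
    fun x h => hδ (by simpa using congrArg im h)

theorem im_integral_inv_ofReal_sub (c : ℝ) {δ : ℝ} (hδ : δ ≠ 0) (s t : ℝ) :
    (∫ x in s..t, ((c : ℂ) - ((x : ℂ) + δ * I))⁻¹).im =
      Real.arctan ((t - c) / δ) - Real.arctan ((s - c) / δ) := by
  rw [← imCLM_apply, ← ContinuousLinearMap.intervalIntegral_comp_comm _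
    ((continuous_inv_ofReal_sub c hδ).intervalIntegrable s t)]
  have him (x : ℝ) : imCLM ((c : ℂ) - ((x : ℂ) + δ * I))⁻¹ = δ / ((c - x) ^ 2 + δ ^ 2) := by
    simp [inv_im, normSq_apply]
    ring
  simp only [him]
  refine integral_eq_sub_of_hasDerivAt (fun x _ => Real.hasDerivAt_arctan_sub_div c hδ x)
    (Continuous.intervalIntegrable ?_ s t)
  exact continuous_const.div (by fun_prop) fun x => by positivity

end Complex

namespace Matrix

variable {n : Type*} [Fintype n] [DecidableEq n]

theorem mul_diagonal_mul_apply {α : Type*} [CommSemiring α] (A B : Matrix n n α) (d : n → α)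
    (i j : n) : (A * diagonal d * B) i j = ∑ k, A i k * d k * B k j := by
  rw [mul_apply]
  simp only [mul_diagonal]

theorem inv_conjStarAlgAut_diagonal {𝕜 : Type*} [Field 𝕜] [StarRing 𝕜]
    (u : unitary (Matrix n n 𝕜)) {d : n → 𝕜} (hd : ∀ k, d k ≠ 0) :
    (Unitary.conjStarAlgAut 𝕜 _ u (diagonal d))⁻¹ =
      Unitary.conjStarAlgAut 𝕜 _ u (diagonal d⁻¹) := by
  refine inv_eq_left_inv ?_
  rw [← map_mul, diagonal_mul_diagonal]
  simp [inv_mul_cancel₀ (hd _)]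

theorem integral_conjStarAlgAut_diagonal_apply {𝕜 : Type*} [RCLike 𝕜]
    (u : unitary (Matrix n n 𝕜)) {g : ℝ → n → 𝕜} {s t : ℝ}
    (hg : ∀ k, IntervalIntegrable (fun x => g x k) MeasureTheory.volume s t) (i j : n) :
    ∫ x in s..t, Unitary.conjStarAlgAut 𝕜 _ u (diagonal (g x)) i j =
      Unitary.conjStarAlgAut 𝕜 _ u (diagonal fun k => ∫ x in s..t, g x k) i j := by
  simp only [Unitary.conjStarAlgAut_apply, mul_diagonal_mul_apply]
  rw [integral_finsetSum fun k _ => (hg k).const_mul _ |>.mul_const _]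
  simp only [integral_mul_const, integral_const_mul]

theorem PosSemidef.conjStarAlgAut {𝕜 : Type*} [RCLike 𝕜] (u : unitary (Matrix n n 𝕜))
    {A : Matrix n n 𝕜} (hA : A.PosSemidef) : (Unitary.conjStarAlgAut 𝕜 _ u A).PosSemidef := by
  simpa [star_eq_conjTranspose] using hA.mul_mul_conjTranspose_same (u : Matrix n n 𝕜)

theorem map_ofReal_mem_unitaryGroup {U : Matrix n n ℝ} (hU : U ∈ unitaryGroup n ℝ) :
    U.map ((↑) : ℝ → ℂ) ∈ unitaryGroup n ℂ := by
  rw [mem_unitaryGroup_iff, star_eq_conjTranspose,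
    ← conjTranspose_map _ (fun _ => (Complex.conj_ofReal _).symm), ← star_eq_conjTranspose]
  have := congrArg (·.map Complex.ofRealHom) (mem_unitaryGroup_iff.mp hU)
  simp only [Matrix.map_mul, Matrix.map_one _ (map_zero _) (map_one _)] at this
  exact this

noncomputable def unitaryGroup.toComplex (U : unitaryGroup n ℝ) : unitary (Matrix n n ℂ) :=
  ⟨(U : Matrix n n ℝ).map (↑), map_ofReal_mem_unitaryGroup U.2⟩

theorem map_ofReal_mul_diagonal_mul_star (U : unitaryGroup n ℝ) (f : n → ℝ) :
    ((U : Matrix n n ℝ) * diagonal f * star (U : Matrix n n ℝ)).map (↑) =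
      Unitary.conjStarAlgAut ℂ _ (unitaryGroup.toComplex U) (diagonal fun k => (f k : ℂ)) := by
  rw [Unitary.conjStarAlgAut_apply, unitaryGroup.toComplex, star_eq_conjTranspose,
    star_eq_conjTranspose, ← conjTranspose_map _ (fun _ => (Complex.conj_ofReal _).symm)]
  change Complex.ofRealHom.mapMatrix _ =
    Complex.ofRealHom.mapMatrix _ * _ * Complex.ofRealHom.mapMatrix _
  rw [map_mul, map_mul, RingHom.mapMatrix_apply _ (diagonal f), diagonal_map (map_zero _)]
  rfl

theorem IsHermitian.map_ofReal_spectral_theorem {X : Matrix n n ℝ} (hX : X.IsHermitian) :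
    X.map (↑) = Unitary.conjStarAlgAut ℂ _ (unitaryGroup.toComplex hX.eigenvectorUnitary)
      (diagonal fun k => (hX.eigenvalues k : ℂ)) := by
  conv_lhs => rw [hX.spectral_theorem]
  exact map_ofReal_mul_diagonal_mul_star _ _

theorem IsHermitian.inv_map_ofReal_sub_smul_one {X : Matrix n n ℝ} (hX : X.IsHermitian) {z : ℂ}
    (hz : z.im ≠ 0) :
    (X.map (↑) - z • 1)⁻¹ =
      Unitary.conjStarAlgAut ℂ _ (unitaryGroup.toComplex hX.eigenvectorUnitary)
        (diagonal fun k => ((hX.eigenvalues k : ℂ) - z)⁻¹) := by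
  rw [hX.map_ofReal_spectral_theorem, ← map_one (Unitary.conjStarAlgAut ℂ _ _), ← map_smul,
    ← map_sub, smul_one_eq_diagonal, diagonal_sub, inv_conjStarAlgAut_diagonal]
  · rfl
  · intro k h
    exact hz (by simpa using congrArg Complex.im h)

end Matrix

theorem matIm_conjStarAlgAut_diagonal {N : ℕ} (u : unitary (Matrix (Fin N) (Fin N) ℂ))
    (w : Fin N → ℂ) :
    matIm (Unitary.conjStarAlgAut ℂ _ u (diagonal w)) =
      Unitary.conjStarAlgAut ℂ _ u (diagonal fun k => ((w k).im : ℂ)) := by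
  rw [matIm, ← star_eq_conjTranspose, ← map_star, ← map_sub, ← map_smul,
    star_eq_conjTranspose, diagonal_conjTranspose, diagonal_sub, ← diagonal_smul]
  congr 2
  ext k
  rw [Complex.im_eq_sub_conj, div_eq_inv_mul]
  rfl

theorem resolventInt_eq_conjStarAlgAut {N : ℕ} {X : Matrix (Fin N) (Fin N) ℝ}
    (hX : X.IsHermitian) {δ : ℝ} (hδ : δ ≠ 0) (s t : ℝ) :
    resolventInt X δ s t =
      Unitary.conjStarAlgAut ℂ _ (unitaryGroup.toComplex hX.eigenvectorUnitary)
        (diagonal fun k => ∫ x in s..t, ((hX.eigenvalues k : ℂ) - ((x : ℂ) + δ * Complex.I))⁻¹) := by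
  have hres (x : ℝ) :=
    hX.inv_map_ofReal_sub_smul_one (z := x + δ * Complex.I) (by simpa using hδ)
  ext i j
  rw [resolventInt, of_apply]
  simp_rw [hres]
  exact integral_conjStarAlgAut_diagonal_apply _
    (fun k => (Complex.continuous_inv_ofReal_sub _ hδ).intervalIntegrable s t) i j

theorem stmt8_general {N : ℕ} (X : Matrix (Fin N) (Fin N) ℝ) (hX : X.IsHermitian)
    (a b γ δ : ℝ) (hδ : 0 < δ) (hγδ : δ ≤ γ) :
    ((specProj X hX a b).map (fun r => (r : ℂ)) +
        (δ / (Real.pi * γ)) • (1 : Matrix (Fin N) (Fin N) ℂ) -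
      (1 / Real.pi) • matIm (resolventInt X δ (a + γ) (b - γ))).PosSemidef := by
  set φ := Unitary.conjStarAlgAut ℂ _ (unitaryGroup.toComplex hX.eigenvectorUnitary)
  rw [specProj, map_ofReal_mul_diagonal_mul_star, resolventInt_eq_conjStarAlgAut hX hδ.ne',
    matIm_conjStarAlgAut_diagonal]
  simp_rw [Complex.im_integral_inv_ofReal_sub _ hδ.ne']
  rw [← Complex.coe_smul, ← Complex.coe_smul, ← map_one φ, ← map_smul, ← map_smul, ← map_add,
    ← map_sub, ← diagonal_one, ← diagonal_smul, ← diagonal_smul, diagonal_add, diagonal_sub]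
  refine (posSemidef_diagonal_iff.mpr fun k => ?_).conjStarAlgAut _
  have hk := Real.arctan_sub_arctan_div_pi_le (a := a) (b := b) (c := hX.eigenvalues k) hδ hγδ
  convert Complex.zero_le_real.mpr (sub_nonneg.mpr hk) using 1
  simp only [Pi.smul_apply, smul_eq_mul]
  push_cast
  ring

/-- `(1/π) Im ∫_{a+γ}^{b-γ} (X - λ - iδ)⁻¹ dλ ≤ P + (δ/(πγ)) Id`
in the positive semidefinite order. -/
theorem stmt8 {N : ℕ} (X : Matrix (Fin N) (Fin N) ℝ) (hX : X.IsHermitian)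
    (a b γ δ : ℝ) (hab : a < b) (hδ : 0 < δ) (hγδ : δ ≤ γ) :
    ((specProj X hX a b).map (fun r => (r : ℂ)) +
        (δ / (Real.pi * γ)) • (1 : Matrix (Fin N) (Fin N) ℂ) -
      (1 / Real.pi) • matIm (resolventInt X δ (a + γ) (b - γ))).PosSemidef :=
  stmt8_general X hX a b γ δ hδ hγδ
end
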